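/- arXiv:0708.3390 — 6 statements merged into one kernel-verified Lean document; each statement's English description precedes it below -/
import Mathlib

section
/- Let P : ℂ[x₁,...,x_d] → ℂ[x₁,...,x_d] be a linear idempotent map whose image is the span of {1, x₁, ..., x_d}, and suppose P(gh) = P(g·P(h)) for all polynomials g, h. Then P is uniquely determined by its values P(x_i x_j) for 1 ≤ i, j ≤ d; i.e., if P₁, P₂ are two such maps with P₁(x_i x_j) = P₂(x_i x_j) for all i, j, then P₁ = P₂. -/
open MvPolynomial

/-! Taking `g = 1` in de Boor's identity `P (g * h) = P (g * P h)` shows that `P` fixes its range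
`span {1, x₁, …, x_d}`. In the induction step on polynomials, `P (p * xᵢ) = P (xᵢ * P p)`, and
`xᵢ * P p` is a linear combination of `xᵢ` and the `xᵢ * xⱼ`, on which `P` is fixed or prescribed. -/

theorem LinearMap.map_eq_self_of_map_mul_eq_map_mul_map {R A : Type*} [Semiring R]
    [NonAssocSemiring A] [Module R A] {P : A →ₗ[R] A}
    (hP : ∀ g h : A, P (g * h) = P (g * P h)) {v : A} (hv : v ∈ LinearMap.range P) : P v = v := by
  obtain ⟨g, rfl⟩ := hv
  simpa using (hP 1 g).symm

namespace MvPolynomial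

variable {σ R : Type*} [CommSemiring R] {P₁ P₂ : MvPolynomial σ R →ₗ[R] MvPolynomial σ R}

theorem map_X_mul_eq_of_mem_span (hX : ∀ i, P₁ (X i) = P₂ (X i))
    (hXX : ∀ i j, P₁ (X i * X j) = P₂ (X i * X j)) (i : σ) {v : MvPolynomial σ R}
    (hv : v ∈ Submodule.span R ({1} ∪ Set.range X)) : P₁ (X i * v) = P₂ (X i * v) := by
  refine LinearMap.eqOn_span (f := P₁ ∘ₗ LinearMap.mulLeft R (X i))
    (g := P₂ ∘ₗ LinearMap.mulLeft R (X i)) ?_ hv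
  rintro _ (rfl | ⟨j, rfl⟩)
  · simpa using hX i
  · exact hXX i j

theorem linearMap_ext_of_map_X_mul_eq
    (hdB₁ : ∀ g h, P₁ (g * h) = P₁ (g * P₁ h)) (hdB₂ : ∀ g h, P₂ (g * h) = P₂ (g * P₂ h))
    (h1 : P₁ 1 = P₂ 1) (hX : ∀ i, ∀ v ∈ LinearMap.range P₁, P₁ (X i * v) = P₂ (X i * v)) :
    P₁ = P₂ := by
  refine LinearMap.ext fun p => ?_
  induction p using MvPolynomial.induction_on with
  | C a => rw [C_eq_smul_one, map_smul, map_smul, h1]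
  | add p q hp hq => rw [map_add, map_add, hp, hq]
  | mul_X p i hp =>
    calc P₁ (p * X i) = P₁ (X i * P₁ p) := by rw [mul_comm, hdB₁]
    _ = P₂ (X i * P₁ p) := hX i _ (LinearMap.mem_range_self _ p)
    _ = P₂ (p * X i) := by rw [hp, ← hdB₂, mul_comm]

end MvPolynomial

theorem ideal_projector_determined_by_quadratic_values_general (d : ℕ)
    (P₁ P₂ : MvPolynomial (Fin d) ℂ →ₗ[ℂ] MvPolynomial (Fin d) ℂ)
    (hrange₁ : LinearMap.range P₁ =
      Submodule.span ℂ ({1} ∪ Set.range (X : Fin d → MvPolynomial (Fin d) ℂ)))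
    (hrange₂ : LinearMap.range P₂ =
      Submodule.span ℂ ({1} ∪ Set.range (X : Fin d → MvPolynomial (Fin d) ℂ)))
    (hdB₁ : ∀ g h : MvPolynomial (Fin d) ℂ, P₁ (g * h) = P₁ (g * P₁ h))
    (hdB₂ : ∀ g h : MvPolynomial (Fin d) ℂ, P₂ (g * h) = P₂ (g * P₂ h))
    (hagree : ∀ i j : Fin d, P₁ (X i * X j) = P₂ (X i * X j)) :
    P₁ = P₂ := by
  set V := Submodule.span ℂ ({1} ∪ Set.range (X : Fin d → MvPolynomial (Fin d) ℂ))
  have hfix₁ : ∀ v ∈ V, P₁ v = v := fun v hv =>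
    LinearMap.map_eq_self_of_map_mul_eq_map_mul_map hdB₁ (hrange₁.ge hv)
  have hfix₂ : ∀ v ∈ V, P₂ v = v := fun v hv =>
    LinearMap.map_eq_self_of_map_mul_eq_map_mul_map hdB₂ (hrange₂.ge hv)
  have hX : ∀ i, X i ∈ V := fun i => Submodule.subset_span (Or.inr ⟨i, rfl⟩)
  have h1 : (1 : MvPolynomial (Fin d) ℂ) ∈ V := Submodule.subset_span (Or.inl rfl)
  refine linearMap_ext_of_map_X_mul_eq hdB₁ hdB₂ (by rw [hfix₁ 1 h1, hfix₂ 1 h1]) ?_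
  intro i v hv
  exact map_X_mul_eq_of_mem_span (fun j => by rw [hfix₁ _ (hX j), hfix₂ _ (hX j)]) hagree i
    (hrange₁.le hv)

/-- An ideal projector onto span{1,x₁,...,x_d} is uniquely determined by its
values on the products xᵢxⱼ. -/
theorem ideal_projector_determined_by_quadratic_values (d : ℕ)
    (P₁ P₂ : MvPolynomial (Fin d) ℂ →ₗ[ℂ] MvPolynomial (Fin d) ℂ)
    (hidem₁ : ∀ g, P₁ (P₁ g) = P₁ g) (hidem₂ : ∀ g, P₂ (P₂ g) = P₂ g)
    (hrange₁ : LinearMap.range P₁ =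
      Submodule.span ℂ ({1} ∪ Set.range (X : Fin d → MvPolynomial (Fin d) ℂ)))
    (hrange₂ : LinearMap.range P₂ =
      Submodule.span ℂ ({1} ∪ Set.range (X : Fin d → MvPolynomial (Fin d) ℂ)))
    (hdB₁ : ∀ g h : MvPolynomial (Fin d) ℂ, P₁ (g * h) = P₁ (g * P₁ h))
    (hdB₂ : ∀ g h : MvPolynomial (Fin d) ℂ, P₂ (g * h) = P₂ (g * P₂ h))
    (hagree : ∀ i j : Fin d, P₁ (X i * X j) = P₂ (X i * X j)) :
    P₁ = P₂ :=
  ideal_projector_determined_by_quadratic_values_general d P₁ P₂ hrange₁ hrange₂ hdB₁ hdB₂ hagree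
end

section
/- Let d = 13. The family of ideals I_B = (x₆² + ℓ₁(B), x₆x₇ + ℓ₂(B), ..., x₁₃² + ℓ₃₆(B)) + (x₁,...,x₅)∩m² + m³ ⊆ ℂ[x₁,...,x₁₃], parametrized by 36×5 complex matrices B (where ℓ_r(B) = b_{r,1}x₁ + ... + b_{r,5}x₅, m is the maximal ideal at the origin, and the 36 quadrics run over all monomials x_i x_j with 6 ≤ i ≤ j ≤ 13), consists of ideals I_B with dim_ℂ ℂ[x₁,...,x₁₃]/I_B = 14, and {1, x₁, ..., x₁₃} is a ℂ-basis of the quotient. -/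
open MvPolynomial

/-- The linear form ℓ_{(i,j)}(B) = b_{(i,j),1}x₁ + ... + b_{(i,j),5}x₅. -/
noncomputable def linPart (B : Fin 13 → Fin 13 → Fin 5 → ℂ) (i j : Fin 13) :
    MvPolynomial (Fin 13) ℂ :=
  ∑ t : Fin 5, C (B i j t) * X (Fin.castLE (by norm_num) t)

/-- The ideal I_B = (x_i x_j + ℓ_{(i,j)}(B) : 6 ≤ i ≤ j ≤ 13)
  + (x₁,...,x₅)∩m² + m³ (indices 0-based: x₆,...,x₁₃ are X 5,...,X 12). -/
noncomputable def idealB (B : Fin 13 → Fin 13 → Fin 5 → ℂ) :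
    Ideal (MvPolynomial (Fin 13) ℂ) :=
  Ideal.span
    ({f | ∃ i j : Fin 13, 5 ≤ i.val ∧ i ≤ j ∧ f = X i * X j + linPart B i j} ∪
     {f | ∃ i j : Fin 13, i.val < 5 ∧ f = X i * X j} ∪
     {f | ∃ i j k : Fin 13, f = X i * X j * X k})

/-!
The quotient is modelled by an explicit 14-dimensional local algebra: the unitization of
`ℂ¹³` with the product `e_i e_j = -ℓ_{ij}(B)` for `6 ≤ i ≤ j` (extended symmetrically)
and `e_i e_j = 0` otherwise. Every such product lies in `span (e₁, …, e₅)`, which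
multiplies to zero, so all triple products vanish; hence the product is associative and
the unitization is a commutative `ℂ`-algebra. Sending `x_i ↦ e_i` kills every generator
of `I_B`, so `1, x₁, …, x₁₃` stay linearly independent modulo `I_B`. Conversely, each
`x_i x_j` is congruent to a linear form modulo `I_B`, so `1` and the variables span the
quotient.
-/

section BilinProduct

variable {R M : Type*} [CommRing R] [AddCommGroup M] [Module R M]

def BilinProduct (_β : M →ₗ[R] M →ₗ[R] M) : Type _ := M

namespace BilinProduct

variable (β : M →ₗ[R] M →ₗ[R] M)

instance : AddCommGroup (BilinProduct β) := inferInstanceAs (AddCommGroup M)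

instance : Module R (BilinProduct β) := inferInstanceAs (Module R M)

def of : M ≃ₗ[R] BilinProduct β := LinearEquiv.refl R M

instance : Mul (BilinProduct β) := ⟨fun x y => of β (β x y)⟩

theorem of_mul_of (x y : M) : of β x * of β y = of β (β x y) := rfl

instance : NonUnitalNonAssocRing (BilinProduct β) where
  left_distrib x := map_add (β x)
  right_distrib x y z := LinearMap.map_add₂ β x y z
  zero_mul := LinearMap.map_zero₂ β
  mul_zero x := map_zero (β x)

instance : IsScalarTower R (BilinProduct β) (BilinProduct β) :=
  ⟨fun r x y => LinearMap.map_smul₂ β r x y⟩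

instance : SMulCommClass R (BilinProduct β) (BilinProduct β) :=
  ⟨fun r x y => (map_smul (β x) r y).symm⟩

abbrev nonUnitalCommRing (hcomm : ∀ x y, β x y = β y x) (hcube : ∀ x y z, β (β x y) z = 0) :
    NonUnitalCommRing (BilinProduct β) where
  mul_assoc x y z :=
    (hcube x y z).trans ((hcomm x _).trans (hcube y z x)).symm
  mul_comm := hcomm

end BilinProduct

end BilinProduct

namespace Unitization

variable {R A ι : Type*} [CommRing R] [AddCommGroup A] [Module R A] [Fintype ι]

theorem linearIndependent_option_elim_one_inr {v : ι → A} (hv : LinearIndependent R v) :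
    LinearIndependent R (fun o : Option ι => o.elim 1 fun i => (v i : Unitization R A)) := by
  rw [Fintype.linearIndependent_iff] at hv ⊢
  intro g hg
  rw [Fintype.sum_option] at hg
  have hfst := congrArg (LinearMap.fst R R A ∘ₗ (linearEquiv R R A).toLinearMap) hg
  have hsnd := congrArg (sndHom R R A) hg
  simp only [map_add, map_sum, map_smul, map_zero] at hfst hsnd
  rintro (_ | i)
  · simpa using hfst
  · exact hv (g ∘ some) (by simpa using hsnd) i

end Unitization

section Span

variable {σ R : Type*} [CommRing R] (I : Ideal (MvPolynomial σ R))

theorem span_one_X_eq_top_of_X_mul_X_mem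
    (h : ∀ i j, Ideal.Quotient.mk I (X i * X j) ∈
      Submodule.span R (Set.range fun o : Option σ => Ideal.Quotient.mk I (o.elim 1 X))) :
    Submodule.span R (Set.range fun o : Option σ => Ideal.Quotient.mk I (o.elim 1 X)) = ⊤ := by
  set S := Submodule.span R (Set.range fun o : Option σ => Ideal.Quotient.mk I (o.elim 1 X))
  have hmul : ∀ s ∈ S, ∀ n, s * Ideal.Quotient.mk I (X n) ∈ S := by
    intro s hs n
    induction hs using Submodule.span_induction with
    | mem x hx =>
      obtain ⟨_ | i, rfl⟩ := hx
      · simpa using (Submodule.subset_span ⟨some n, rfl⟩ : Ideal.Quotient.mk I (X n) ∈ S)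
      · simpa [← map_mul] using h i n
    | zero => simp
    | add x y _ _ hx hy => rw [add_mul]; exact add_mem hx hy
    | smul a x _ hx => rw [smul_mul_assoc]; exact Submodule.smul_mem _ _ hx
  rw [eq_top_iff]
  rintro q -
  obtain ⟨p, rfl⟩ := Ideal.Quotient.mk_surjective q
  induction p using MvPolynomial.induction_on with
  | C a =>
    rw [← Ideal.Quotient.mkₐ_eq_mk R, ← algebraMap_eq, AlgHom.commutes,
      Algebra.algebraMap_eq_smul_one]
    exact Submodule.smul_mem _ _ (Submodule.subset_span ⟨none, by simp⟩)
  | add p q hp hq => rw [map_add]; exact add_mem hp hq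
  | mul_X p n hp => rw [map_mul]; exact hmul _ hp n

end Span

namespace IdealB

variable (B : Fin 13 → Fin 13 → Fin 5 → ℂ)

noncomputable def linVec (i j : Fin 13) : Fin 13 → ℂ :=
  ∑ t, B i j t • Pi.single (Fin.castLE (by norm_num) t) 1

/-- The product `e_i * e_j` in the model of the quotient; `min`/`max` symmetrise the relations
of `I_B`, which are only imposed for `i ≤ j`. -/
noncomputable def quadCoeff (i j : Fin 13) : Fin 13 → ℂ :=
  if 5 ≤ i.val ∧ 5 ≤ j.val then -linVec B (min i j) (max i j) else 0

theorem quadCoeff_comm (i j : Fin 13) : quadCoeff B i j = quadCoeff B j i := by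
  simp only [quadCoeff, and_comm, min_comm, max_comm]

theorem quadCoeff_of_lt {k : Fin 13} (hk : k.val < 5) (j : Fin 13) : quadCoeff B k j = 0 :=
  if_neg fun h => by omega

theorem quadCoeff_of_le {i j : Fin 13} (hi : 5 ≤ i.val) (hij : i ≤ j) :
    quadCoeff B i j = -linVec B i j := by
  rw [quadCoeff, if_pos ⟨hi, hi.trans hij⟩, min_eq_left hij, max_eq_right hij]

noncomputable def quadProduct : (Fin 13 → ℂ) →ₗ[ℂ] (Fin 13 → ℂ) →ₗ[ℂ] (Fin 13 → ℂ) :=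
  (Pi.basisFun ℂ (Fin 13)).constr ℂ fun i => (Pi.basisFun ℂ (Fin 13)).constr ℂ (quadCoeff B i)

theorem quadProduct_single (i j : Fin 13) :
    quadProduct B (Pi.single i 1) (Pi.single j 1) = quadCoeff B i j := by
  simp only [quadProduct, ← Pi.basisFun_apply, Module.Basis.constr_basis]

theorem quadProduct_comm (x y : Fin 13 → ℂ) : quadProduct B x y = quadProduct B y x := by
  have : quadProduct B = (quadProduct B).flip :=
    LinearMap.ext_basis (Pi.basisFun ℂ (Fin 13)) (Pi.basisFun ℂ (Fin 13)) fun i j => by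
      simp only [Pi.basisFun_apply, LinearMap.flip_apply, quadProduct_single, quadCoeff_comm]
  exact LinearMap.congr_fun₂ this x y

theorem quadProduct_single_of_lt {k : Fin 13} (hk : k.val < 5) :
    quadProduct B (Pi.single k 1) = 0 :=
  (Pi.basisFun ℂ (Fin 13)).ext fun j => by
    simp only [Pi.basisFun_apply, quadProduct_single, quadCoeff_of_lt B hk, LinearMap.zero_apply]

theorem quadProduct_quadCoeff (i j : Fin 13) : quadProduct B (quadCoeff B i j) = 0 := by
  unfold quadCoeff
  split_ifs
  · simp only [linVec, map_neg, map_sum, map_smul, neg_eq_zero]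
    exact Finset.sum_eq_zero fun t _ => by
      rw [quadProduct_single_of_lt B (by simp), smul_zero]
  · exact map_zero _

theorem quadProduct_quadProduct (x y z : Fin 13 → ℂ) :
    quadProduct B (quadProduct B x y) z = 0 := by
  have : (quadProduct B).compr₂ (quadProduct B) = 0 :=
    LinearMap.ext_basis (Pi.basisFun ℂ (Fin 13)) (Pi.basisFun ℂ (Fin 13)) fun i j => by
      simp only [Pi.basisFun_apply, LinearMap.compr₂_apply, quadProduct_single,
        quadProduct_quadCoeff, LinearMap.zero_apply]
  rw [← LinearMap.compr₂_apply, this, LinearMap.zero_apply, LinearMap.zero_apply,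
    LinearMap.zero_apply]

noncomputable instance : NonUnitalCommRing (BilinProduct (quadProduct B)) :=
  BilinProduct.nonUnitalCommRing _ (quadProduct_comm B) (quadProduct_quadProduct B)

noncomputable def modelVar (i : Fin 13) : Unitization ℂ (BilinProduct (quadProduct B)) :=
  (BilinProduct.of _ (Pi.single i 1) : BilinProduct (quadProduct B))

theorem modelVar_mul_modelVar (i j : Fin 13) :
    modelVar B i * modelVar B j =
      ((BilinProduct.of _ (quadCoeff B i j) : BilinProduct (quadProduct B)) :
        Unitization ℂ _) := by
  rw [modelVar, modelVar, ← Unitization.inr_mul, BilinProduct.of_mul_of, quadProduct_single]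

theorem aeval_linPart (i j : Fin 13) :
    aeval (modelVar B) (linPart B i j) =
      ((BilinProduct.of _ (linVec B i j) : BilinProduct (quadProduct B)) : Unitization ℂ _) := by
  simp only [linPart, linVec, map_sum, map_smul, ← smul_eq_C_mul, aeval_X, modelVar]
  rw [← Unitization.inrHom_apply ℂ, map_sum]
  simp only [map_smul, Unitization.inrHom_apply]

theorem X_mul_X_add_linPart_mem {i j : Fin 13} (hi : 5 ≤ i.val) (hij : i ≤ j) :
    X i * X j + linPart B i j ∈ idealB B :=
  Ideal.subset_span <| Or.inl <| Or.inl ⟨i, j, hi, hij, rfl⟩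

theorem X_mul_X_mem {i : Fin 13} (hi : i.val < 5) (j : Fin 13) : X i * X j ∈ idealB B :=
  Ideal.subset_span <| Or.inl <| Or.inr ⟨i, j, hi, rfl⟩

theorem idealB_le_ker_aeval : idealB B ≤ RingHom.ker (aeval (modelVar B)) := by
  rw [idealB, Ideal.span_le]
  rintro f ((⟨i, j, hi, hij, rfl⟩ | ⟨i, j, hi, rfl⟩) | ⟨i, j, k, rfl⟩) <;>
    simp only [SetLike.mem_coe, RingHom.mem_ker, map_add, map_mul, aeval_X]
  · rw [modelVar_mul_modelVar, aeval_linPart, quadCoeff_of_le B hi hij, ← Unitization.inr_add,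
      ← map_add, neg_add_cancel, map_zero, Unitization.inr_zero]
  · rw [modelVar_mul_modelVar, quadCoeff_of_lt B hi, map_zero, Unitization.inr_zero]
  · rw [modelVar_mul_modelVar, modelVar, ← Unitization.inr_mul, BilinProduct.of_mul_of,
      quadProduct_quadCoeff, LinearMap.zero_apply, map_zero, Unitization.inr_zero]

noncomputable def toModel :
    (MvPolynomial (Fin 13) ℂ ⧸ idealB B) →ₐ[ℂ] Unitization ℂ (BilinProduct (quadProduct B)) :=
  Ideal.Quotient.liftₐ _ (aeval (modelVar B)) fun _ hp => idealB_le_ker_aeval B hp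

theorem toModel_mk (p : MvPolynomial (Fin 13) ℂ) :
    toModel B (Ideal.Quotient.mk (idealB B) p) = aeval (modelVar B) p :=
  rfl

theorem linearIndependent_mk_one_X :
    LinearIndependent ℂ
      (fun o : Option (Fin 13) => Ideal.Quotient.mk (idealB B) (o.elim 1 X)) := by
  refine LinearIndependent.of_comp (toModel B).toLinearMap ?_
  have hcomp : (toModel B).toLinearMap ∘
      (fun o : Option (Fin 13) => Ideal.Quotient.mk (idealB B) (o.elim 1 X)) =
      fun o => o.elim 1 (modelVar B) := by
    funext o
    rcases o with _ | i <;> simp [toModel_mk]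
  have hv : LinearIndependent ℂ fun i => BilinProduct.of (quadProduct B) (Pi.single i 1) := by
    simpa [Function.comp_def] using
      (Pi.basisFun ℂ (Fin 13)).linearIndependent.map' _ (BilinProduct.of (quadProduct B)).ker
  rw [hcomp]
  exact Unitization.linearIndependent_option_elim_one_inr hv

theorem mk_X_mul_X_mem_span (i j : Fin 13) :
    Ideal.Quotient.mk (idealB B) (X i * X j) ∈ Submodule.span ℂ
      (Set.range fun o : Option (Fin 13) => Ideal.Quotient.mk (idealB B) (o.elim 1 X)) := by
  wlog hij : i ≤ j generalizing i j
  · simpa only [mul_comm] using this j i (le_of_not_ge hij)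
  by_cases hi : i.val < 5
  · rw [Ideal.Quotient.eq_zero_iff_mem.2 (X_mul_X_mem B hi j)]
    exact zero_mem _
  · have hrel := Ideal.Quotient.eq_zero_iff_mem.2 (X_mul_X_add_linPart_mem B (by omega) hij)
    rw [map_add] at hrel
    rw [eq_neg_of_add_eq_zero_left hrel, linPart, map_sum]
    refine neg_mem (sum_mem fun t _ => ?_)
    rw [← smul_eq_C_mul, ← Ideal.Quotient.mkₐ_eq_mk ℂ, map_smul]
    exact Submodule.smul_mem _ _ (Submodule.subset_span ⟨some _, rfl⟩)

end IdealB

/-- Each I_B has colength 14, and the images of {1, x₁, ..., x₁₃} form a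
ℂ-basis of the quotient ring. -/
theorem idealB_colength_and_basis (B : Fin 13 → Fin 13 → Fin 5 → ℂ) :
    Module.finrank ℂ (MvPolynomial (Fin 13) ℂ ⧸ idealB B) = 14 ∧
    LinearIndependent ℂ
      (fun o : Option (Fin 13) => Ideal.Quotient.mk (idealB B) (o.elim 1 X)) ∧
    Submodule.span ℂ
      (Set.range
        (fun o : Option (Fin 13) => Ideal.Quotient.mk (idealB B) (o.elim 1 X)))
      = ⊤ := by
  have hli := IdealB.linearIndependent_mk_one_X B
  have hspan := span_one_X_eq_top_of_X_mul_X_mem _ (IdealB.mk_X_mul_X_mem_span B)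
  refine ⟨?_, hli, hspan⟩
  rw [Module.finrank_eq_card_basis (Module.Basis.mk hli hspan.ge), Fintype.card_option,
    Fintype.card_fin]
end

section
/- With d = 13 and I_B as above, the map B ↦ I_B from 36×5 complex matrices to ideals of ℂ[x₁,...,x₁₃] is injective; hence the family {I_B} of colength-14 ideals has dimension 180 = 36·5 as an affine space of parameters. -/
open MvPolynomial


open MvPolynomial

namespace IdealBInj

abbrev ι : Fin 5 → Fin 13 := Fin.castLE (by norm_num)

noncomputable def e2 (i j : Fin 13) : Fin 13 →₀ ℕ :=
  Finsupp.single i 1 + Finsupp.single j 1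

def dg (f : Fin 13 →₀ ℕ) : ℕ := ∑ x : Fin 13, f x

lemma dg_single (i : Fin 13) : dg (Finsupp.single i 1) = 1 := by
  simp [dg, Finsupp.single_apply]

lemma dg_e2 (i j : Fin 13) : dg (e2 i j) = 2 := by
  simp [e2, dg, Finsupp.single_apply, Finset.sum_add_distrib]

lemma dg_mono {f g : Fin 13 →₀ ℕ} (h : f ≤ g) : dg f ≤ dg g :=
  Finset.sum_le_sum fun x _ => Finsupp.le_def.mp h x

lemma eq_of_le_of_dg {f g : Fin 13 →₀ ℕ} (h : f ≤ g) (hd : dg f = dg g) : f = g := by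
  ext x
  exact (Finset.sum_eq_sum_iff_of_le (fun x _ => Finsupp.le_def.mp h x)).mp hd x
    (Finset.mem_univ x)

lemma pair_eq {i j a b : Fin 13} (hij : i ≤ j) (hab : a ≤ b) (h : e2 i j = e2 a b) :
    i = a ∧ j = b := by
  have key : ∀ x : Fin 13, ((if i = x then 1 else 0) + (if j = x then 1 else 0) : ℕ)
      = (if a = x then 1 else 0) + (if b = x then 1 else 0) := by
    intro x
    have := DFunLike.congr_fun h x
    simpa [e2, Finsupp.single_apply] using this
  have d1 : a = i ∨ b = i := by
    by_contra hc; push_neg at hc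
    have hh := key i
    rw [if_pos rfl, if_neg hc.1, if_neg hc.2] at hh
    split_ifs at hh <;> omega
  have d2 : a = j ∨ b = j := by
    by_contra hc; push_neg at hc
    have hh := key j
    rw [if_pos rfl, if_neg hc.1, if_neg hc.2] at hh
    split_ifs at hh <;> omega
  have d3 : i = a ∨ j = a := by
    by_contra hc; push_neg at hc
    have hh := key a
    rw [if_pos rfl, if_neg hc.1, if_neg hc.2] at hh
    split_ifs at hh <;> omega
  have d4 : i = b ∨ j = b := by
    by_contra hc; push_neg at hc
    have hh := key b
    rw [if_pos rfl, if_neg hc.1, if_neg hc.2] at hh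
    split_ifs at hh <;> omega
  rw [Fin.le_def] at hij hab
  simp only [Fin.ext_iff] at d1 d2 d3 d4 ⊢
  omega

lemma XmulX (i j : Fin 13) :
    (X i * X j : MvPolynomial (Fin 13) ℂ) = monomial (e2 i j) 1 := by
  rw [X, X, monomial_mul, mul_one, e2]

lemma XXX (i j k : Fin 13) :
    (X i * X j * X k : MvPolynomial (Fin 13) ℂ)
      = monomial (e2 i j + Finsupp.single k 1) 1 := by
  rw [XmulX, X, monomial_mul, mul_one]

lemma single_le_single {s t : Fin 13} :
    (Finsupp.single s 1 : Fin 13 →₀ ℕ) ≤ Finsupp.single t 1 ↔ s = t := by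
  constructor
  · intro h
    have := Finsupp.le_def.mp h s
    simp [Finsupp.single_apply] at this
    split_ifs at this with hs
    · exact hs.symm
    · omega
  · rintro rfl; exact le_rfl

lemma not_le_single_e2 {s a b : Fin 13} (hs : s.val < 5) (ha : 5 ≤ a.val) (hb : 5 ≤ b.val) :
    ¬ (Finsupp.single s 1 : Fin 13 →₀ ℕ) ≤ e2 a b := by
  intro h
  have := Finsupp.le_def.mp h s
  have has : a ≠ s := fun e => by rw [e] at ha; omega
  have hbs : b ≠ s := fun e => by rw [e] at hb; omega
  simp [e2, Finsupp.single_apply, has, hbs] at this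

lemma not_e2_le_single {i j t : Fin 13} : ¬ e2 i j ≤ Finsupp.single t 1 := by
  intro h
  have := dg_mono h
  rw [dg_e2, dg_single] at this
  omega

lemma e2_le_e2 {i j a b : Fin 13} (hij : i ≤ j) (hab : a ≤ b) :
    e2 i j ≤ e2 a b ↔ a = i ∧ b = j := by
  constructor
  · intro h
    have he : e2 i j = e2 a b := eq_of_le_of_dg h (by rw [dg_e2, dg_e2])
    obtain ⟨h1, h2⟩ := pair_eq hij hab he
    exact ⟨h1.symm, h2.symm⟩
  · rintro ⟨rfl, rfl⟩; exact le_rfl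

lemma not_e3_le_single {i j k t : Fin 13} :
    ¬ e2 i j + Finsupp.single k 1 ≤ Finsupp.single t 1 := by
  intro h
  have := dg_mono h
  have h3 : dg (e2 i j + Finsupp.single k 1) = 3 := by
    simp [e2, dg, Finsupp.single_apply, Finset.sum_add_distrib]
  rw [h3, dg_single] at this
  omega

lemma not_e3_le_e2 {i j k a b : Fin 13} :
    ¬ e2 i j + Finsupp.single k 1 ≤ e2 a b := by
  intro h
  have := dg_mono h
  have h3 : dg (e2 i j + Finsupp.single k 1) = 3 := by
    simp [e2, dg, Finsupp.single_apply, Finset.sum_add_distrib]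
  rw [h3, dg_e2] at this
  omega

/-- The linear functional that detects `B i j t`. -/
noncomputable def Lfun (D : Fin 13 → Fin 13 → Fin 5 → ℂ) (t : Fin 5)
    (q : MvPolynomial (Fin 13) ℂ) : ℂ :=
  coeff (Finsupp.single (ι t) 1) q -
    ∑ a : Fin 13, ∑ b : Fin 13,
      if 5 ≤ a.val ∧ a ≤ b then D a b t * coeff (e2 a b) q else 0

lemma Lfun_add (D t) (x y : MvPolynomial (Fin 13) ℂ) :
    Lfun D t (x + y) = Lfun D t x + Lfun D t y := by
  have : ∀ a b : Fin 13, (if 5 ≤ a.val ∧ a ≤ b then D a b t * coeff (e2 a b) (x + y) else 0)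
      = (if 5 ≤ a.val ∧ a ≤ b then D a b t * coeff (e2 a b) x else 0)
        + (if 5 ≤ a.val ∧ a ≤ b then D a b t * coeff (e2 a b) y else 0) := by
    intro a b
    rw [coeff_add]
    split <;> ring
  have h2 : (∑ a : Fin 13, ∑ b : Fin 13,
        if 5 ≤ a.val ∧ a ≤ b then D a b t * coeff (e2 a b) (x + y) else 0)
      = (∑ a : Fin 13, ∑ b : Fin 13,
          if 5 ≤ a.val ∧ a ≤ b then D a b t * coeff (e2 a b) x else 0)
        + (∑ a : Fin 13, ∑ b : Fin 13,
          if 5 ≤ a.val ∧ a ≤ b then D a b t * coeff (e2 a b) y else 0) := by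
    rw [← Finset.sum_add_distrib]
    refine Finset.sum_congr rfl fun a _ => ?_
    rw [← Finset.sum_add_distrib]
    exact Finset.sum_congr rfl fun b _ => this a b
  unfold Lfun
  rw [coeff_add, h2]
  ring

lemma coeff_mul_linPart (m : Fin 13 →₀ ℕ) (Cm : Fin 13 → Fin 13 → Fin 5 → ℂ)
    (i j : Fin 13) (p : MvPolynomial (Fin 13) ℂ) :
    coeff m (p * linPart Cm i j)
      = ∑ s : Fin 5, Cm i j s *
          (if Finsupp.single (ι s) 1 ≤ m then coeff (m - Finsupp.single (ι s) 1) p else 0) := by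
  rw [linPart, Finset.mul_sum, coeff_sum]
  refine Finset.sum_congr rfl fun s _ => ?_
  rw [mul_left_comm, coeff_C_mul, X, coeff_mul_monomial']
  congr 1
  split <;> simp

lemma coeff_single_mul_linPart (t : Fin 5) (Cm : Fin 13 → Fin 13 → Fin 5 → ℂ)
    (i j : Fin 13) (p : MvPolynomial (Fin 13) ℂ) :
    coeff (Finsupp.single (ι t) 1) (p * linPart Cm i j) = Cm i j t * coeff 0 p := by
  rw [coeff_mul_linPart]
  have key : ∀ s : Fin 5, Cm i j s *
      (if Finsupp.single (ι s) 1 ≤ Finsupp.single (ι t) 1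
        then coeff (Finsupp.single (ι t) 1 - Finsupp.single (ι s) 1) p else 0)
      = if s = t then Cm i j t * coeff 0 p else 0 := by
    intro s
    rcases eq_or_ne s t with rfl | hs
    · rw [if_pos le_rfl, if_pos rfl, tsub_self]
    · rw [if_neg, if_neg hs, mul_zero]
      intro hle
      exact hs (Fin.castLE_injective _ (single_le_single.mp hle))
  rw [Finset.sum_congr rfl fun s _ => key s, Finset.sum_ite_eq']
  simp

lemma coeff_e2_mul_linPart {a b : Fin 13} (ha : 5 ≤ a.val) (hb : 5 ≤ b.val)
    (Cm : Fin 13 → Fin 13 → Fin 5 → ℂ) (i j : Fin 13) (p : MvPolynomial (Fin 13) ℂ) :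
    coeff (e2 a b) (p * linPart Cm i j) = 0 := by
  rw [coeff_mul_linPart]
  refine Finset.sum_eq_zero fun s _ => ?_
  rw [if_neg (not_le_single_e2 (by simp) ha hb), mul_zero]

lemma not_e2_le_e2_low {i j a b : Fin 13} (hi : i.val < 5) (ha : 5 ≤ a.val)
    (hb : 5 ≤ b.val) : ¬ e2 i j ≤ e2 a b := by
  intro h
  have := Finsupp.le_def.mp h i
  have hai : a ≠ i := fun e => by rw [e] at ha; omega
  have hbi : b ≠ i := fun e => by rw [e] at hb; omega
  simp only [e2, Finsupp.add_apply, Finsupp.single_apply, if_pos rfl,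
    if_neg hai, if_neg hbi] at this
  split_ifs at this <;> omega

lemma Lfun_mul_gen (D Cm : Fin 13 → Fin 13 → Fin 5 → ℂ) (t : Fin 5) {i j : Fin 13}
    (hi : 5 ≤ i.val) (hij : i ≤ j) (p : MvPolynomial (Fin 13) ℂ) :
    Lfun D t (p * (X i * X j + linPart Cm i j))
      = (Cm i j t - D i j t) * coeff 0 p := by
  have hA : Lfun D t (p * (X i * X j)) = -(D i j t * coeff 0 p) := by
    unfold Lfun
    rw [XmulX, coeff_mul_monomial', if_neg not_e2_le_single]
    have key : ∀ a b : Fin 13,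
        (if 5 ≤ a.val ∧ a ≤ b then D a b t * coeff (e2 a b) (p * monomial (e2 i j) 1) else 0)
          = if a = i ∧ b = j then D i j t * coeff 0 p else 0 := by
      intro a b
      by_cases hc : 5 ≤ a.val ∧ a ≤ b
      · rw [if_pos hc, coeff_mul_monomial']
        by_cases he : a = i ∧ b = j
        · obtain ⟨rfl, rfl⟩ := he
          rw [if_pos le_rfl, tsub_self, if_pos ⟨rfl, rfl⟩, mul_one]
        · rw [if_neg (fun hle => he ((e2_le_e2 hij hc.2).mp hle)), mul_zero, if_neg he]
      · rw [if_neg hc, if_neg (fun he => hc (by rw [he.1, he.2]; exact ⟨hi, hij⟩))]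
    rw [Finset.sum_congr rfl fun a _ => Finset.sum_congr rfl fun b _ => key a b]
    simp [ite_and, Finset.sum_ite_eq']
  have hB : Lfun D t (p * linPart Cm i j) = Cm i j t * coeff 0 p := by
    unfold Lfun
    rw [coeff_single_mul_linPart]
    have key : ∀ a b : Fin 13,
        (if 5 ≤ a.val ∧ a ≤ b then D a b t * coeff (e2 a b) (p * linPart Cm i j) else 0)
          = 0 := by
      intro a b
      split
      · next hc =>
          rw [coeff_e2_mul_linPart hc.1 (le_trans hc.1 (Fin.le_def.mp hc.2)), mul_zero]
      · rfl
    rw [Finset.sum_congr rfl fun a _ => Finset.sum_congr rfl fun b _ => key a b]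
    simp
  rw [mul_add, Lfun_add, hA, hB]
  ring

lemma Lfun_mul_sq (D : Fin 13 → Fin 13 → Fin 5 → ℂ) (t : Fin 5) {i : Fin 13} (j : Fin 13)
    (hi : i.val < 5) (p : MvPolynomial (Fin 13) ℂ) :
    Lfun D t (p * (X i * X j)) = 0 := by
  unfold Lfun
  rw [XmulX, coeff_mul_monomial', if_neg not_e2_le_single]
  have key : ∀ a b : Fin 13,
      (if 5 ≤ a.val ∧ a ≤ b then D a b t * coeff (e2 a b) (p * monomial (e2 i j) 1) else 0)
        = 0 := by
    intro a b
    split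
    · next hc =>
        rw [coeff_mul_monomial',
          if_neg (not_e2_le_e2_low hi hc.1 (le_trans hc.1 (Fin.le_def.mp hc.2))), mul_zero]
    · rfl
  rw [Finset.sum_congr rfl fun a _ => Finset.sum_congr rfl fun b _ => key a b]
  simp

lemma Lfun_mul_cube (D : Fin 13 → Fin 13 → Fin 5 → ℂ) (t : Fin 5) (i j k : Fin 13)
    (p : MvPolynomial (Fin 13) ℂ) :
    Lfun D t (p * (X i * X j * X k)) = 0 := by
  unfold Lfun
  rw [XXX, coeff_mul_monomial', if_neg not_e3_le_single]
  have key : ∀ a b : Fin 13,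
      (if 5 ≤ a.val ∧ a ≤ b
        then D a b t * coeff (e2 a b) (p * monomial (e2 i j + Finsupp.single k 1) 1) else 0)
        = 0 := by
    intro a b
    split
    · rw [coeff_mul_monomial', if_neg not_e3_le_e2, mul_zero]
    · rfl
  rw [Finset.sum_congr rfl fun a _ => Finset.sum_congr rfl fun b _ => key a b]
  simp

lemma Lfun_zero (D : Fin 13 → Fin 13 → Fin 5 → ℂ) (t : Fin 5) : Lfun D t 0 = 0 := by
  simp [Lfun]

lemma Lfun_vanish (D : Fin 13 → Fin 13 → Fin 5 → ℂ) (t : Fin 5)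
    {q : MvPolynomial (Fin 13) ℂ} (hq : q ∈ idealB D) :
    ∀ p, Lfun D t (p * q) = 0 := by
  refine Submodule.span_induction ?_ ?_ ?_ ?_ hq
  · rintro x ((⟨i, j, hi, hij, rfl⟩ | ⟨i, j, hi, rfl⟩) | ⟨i, j, k, rfl⟩) p
    · rw [Lfun_mul_gen D D t hi hij, sub_self, zero_mul]
    · exact Lfun_mul_sq D t j hi p
    · exact Lfun_mul_cube D t i j k p
  · intro p
    rw [mul_zero, Lfun_zero]
  · intro x y _ _ ihx ihy p
    rw [mul_add, Lfun_add, ihx p, ihy p, add_zero]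
  · intro a x _ ihx p
    rw [smul_eq_mul, ← mul_assoc]
    exact ihx (p * a)

end IdealBInj

/-- The map B ↦ I_B is injective (on the relevant index range 6 ≤ i ≤ j ≤ 13),
so the family {I_B} of colength-14 ideals is an affine space of parameters of
dimension 36·5 = 180. -/
theorem idealB_injective (B B' : Fin 13 → Fin 13 → Fin 5 → ℂ)
    (h : idealB B = idealB B') :
    (∀ i j : Fin 13, 5 ≤ i.val → i ≤ j → B i j = B' i j) ∧ 36 * 5 = 180 := by
  refine ⟨?_, by norm_num⟩
  intro i j hi hij
  funext t
  have hmem : X i * X j + linPart B i j ∈ idealB B' := by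
    rw [← h]
    exact Ideal.subset_span (Or.inl (Or.inl ⟨i, j, hi, hij, rfl⟩))
  have h0 := IdealBInj.Lfun_vanish B' t hmem 1
  have h1 := IdealBInj.Lfun_mul_gen B' B t hi hij 1
  rw [one_mul] at h0 h1
  rw [h0] at h1
  have hc1 : coeff (0 : Fin 13 →₀ ℕ) (1 : MvPolynomial (Fin 13) ℂ) = 1 := by simp
  rw [hc1, mul_one] at h1
  exact sub_eq_zero.mp h1.symm
end

section
/- Let λ = (λ₁ ≥ ... ≥ λ_d ≥ 0) be a partition appearing (i.e., with nonzero multiplicity under the Littlewood–Richardson rule) in the decomposition of S_{(4,3,2,...,2,1)}V ⊗ (S_{(3,1,...,1,0)}V)^{⊗(r−2)} for dim V = d and r ≥ 2. Then for every k with 0 ≤ k ≤ d−1, λ_{d−k} + λ_{d−k+1} + ... + λ_d ≥ rk + 1. -/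
open Finset MvPolynomial

/-- The alternant a_α = Σ_{σ ∈ S_d} sgn(σ) Π_i x_{σ(i)}^{α_i}. -/
noncomputable def alternant (d : ℕ) (α : Fin d → ℕ) : MvPolynomial (Fin d) ℚ :=
  ∑ σ : Equiv.Perm (Fin d),
    (Equiv.Perm.sign σ : ℤ) • ∏ i : Fin d, X (σ i) ^ α i

/-- The Schur polynomial s_λ in d variables, via the bialternant formula
s_λ = a_{λ+δ}/a_δ with δ = (d−1, d−2, ..., 1, 0), viewed in the fraction
field.  The Schur polynomials are the characters of the Schur modules S_λ V,
so nonzero multiplicity of S_λ V in a tensor product is detected by its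
coefficient in the Schur expansion of the product of Schur polynomials. -/
noncomputable def schurPoly (d : ℕ) (l : Fin d → ℕ) :
    FractionRing (MvPolynomial (Fin d) ℚ) :=
  algebraMap (MvPolynomial (Fin d) ℚ) _
      (alternant d (fun i => l i + (d - 1 - i.val))) /
    algebraMap (MvPolynomial (Fin d) ℚ) _
      (alternant d (fun i => d - 1 - i.val))

/-- The partition (4,3,2,...,2,1) of 2d+2 (d parts, 0-based indices). -/
def partFourThreeTwos (d : ℕ) : Fin d → ℕ :=
  fun i => if i.val = 0 then 4 else if i.val = 1 then 3
    else if i.val = d - 1 then 1 else 2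

/-- The partition (3,1,1,...,1,0) of d+1 (d parts, 0-based indices). -/
def partThreeOnes (d : ℕ) : Fin d → ℕ :=
  fun i => if i.val = 0 then 3 else if i.val = d - 1 then 0 else 1

/-!
Clearing the common denominator `a_δ` turns the Schur expansion into the polynomial identity
`a_{μ+δ} a_{ν+δ}^n = ∑_λ c_λ a_{λ+δ} a_δ^n`. The monomials of an alternant `a_α` are
rearrangements of `α`, so by the rearrangement inequality every monomial on the left has tail
sum at least that of `(μ+δ) + n(ν+δ)`. On the right, among the `λ` of minimal tail sum take the
lexicographically largest: the lex-leading monomial `λ+δ+nδ` of its term occurs in no other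
term, hence on the left with coefficient `c_λ ≠ 0`. So every `λ` has tail sum at least
`tail μ + n tail ν ≥ (2k+1) + (r-2)k`.
-/

theorem Finset.nsmul_add_le_sum_of_le_of_ne {ι M : Type*} [AddCommMonoid M] [PartialOrder M]
    [IsOrderedAddMonoid M] {s : Finset ι} {f : ι → M} {j : ι} {a : M} (hj : j ∈ s)
    (h : ∀ i ∈ s, i ≠ j → a ≤ f i) : (#s - 1) • a + f j ≤ ∑ i ∈ s, f i := by
  classical
  rw [← add_sum_erase s f hj, ← card_erase_of_mem hj, add_comm (f j)]
  exact add_le_add_left (card_nsmul_le_sum _ _ _ fun i hi =>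
    h i (mem_of_mem_erase hi) (ne_of_mem_erase hi)) _

theorem Fin.card_filter_le_val (d t : ℕ) : #{i : Fin d | t ≤ i.val} = d - t := by
  have h := card_filter_add_card_filter_not (s := (univ : Finset (Fin d))) (fun i => i.val < t)
  simp only [not_lt, card_univ, Fintype.card_fin, Fin.card_filter_val_lt] at h
  omega

section Weight

variable {σ R M : Type*} [CommSemiring R] [AddCommMonoid M] [PartialOrder M]
  [IsOrderedAddMonoid M] {w : (σ →₀ ℕ) →+ M}

theorem MvPolynomial.le_weight_of_mem_support_mul {p q : MvPolynomial σ R} {a b : M}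
    (hp : ∀ e ∈ p.support, a ≤ w e) (hq : ∀ e ∈ q.support, b ≤ w e) :
    ∀ e ∈ (p * q).support, a + b ≤ w e := by
  classical
  intro e he
  obtain ⟨x, hx, y, hy, rfl⟩ := Finset.mem_add.mp (support_mul p q he)
  rw [map_add]
  exact add_le_add (hp x hx) (hq y hy)

theorem MvPolynomial.le_weight_of_mem_support_pow {p : MvPolynomial σ R} {a : M}
    (hp : ∀ e ∈ p.support, a ≤ w e) (n : ℕ) :
    ∀ e ∈ (p ^ n).support, n • a ≤ w e := by
  induction n with
  | zero =>
    intro e he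
    rw [pow_zero] at he
    rw [zero_smul, mem_singleton.mp (support_monomial_subset he), map_zero]
  | succ n ih =>
    rw [pow_succ, succ_nsmul]
    exact le_weight_of_mem_support_mul ih hp

end Weight

theorem MonomialOrder.exists_coeff_degree_sum_eq {ι σ R β : Type*} [CommSemiring R]
    [LinearOrder β] (m : MonomialOrder σ) (w : (σ →₀ ℕ) → β) {s : Finset ι}
    (hs : s.Nonempty) {P : ι → MvPolynomial σ R} (hmonic : ∀ i ∈ s, m.Monic (P i))
    (hinj : Set.InjOn (fun i => m.degree (P i)) s)
    (hlow : ∀ i ∈ s, ∀ e ∈ (P i).support, w (m.degree (P i)) ≤ w e) (c : ι → R) :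
    ∃ i ∈ s, (∀ j ∈ s, w (m.degree (P i)) ≤ w (m.degree (P j))) ∧
      coeff (m.degree (P i)) (∑ j ∈ s, c j • P j) = c i := by
  classical
  obtain ⟨i₀, hi₀, hmin⟩ := s.exists_min_image (fun j => w (m.degree (P j))) hs
  obtain ⟨i, hi, hmax⟩ :=
    (s.filter fun j => w (m.degree (P j)) = w (m.degree (P i₀))).exists_max_image
      (fun j => m.toSyn (m.degree (P j))) ⟨i₀, mem_filter.mpr ⟨hi₀, rfl⟩⟩
  obtain ⟨his, hwi⟩ := mem_filter.mp hi
  refine ⟨i, his, fun j hj => hwi ▸ hmin j hj, ?_⟩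
  have hvanish : ∀ j ∈ s, j ≠ i → coeff (m.degree (P i)) (P j) = 0 := by
    intro j hj hji
    by_contra h
    have hsupp := mem_support_iff.mpr h
    have hwj : w (m.degree (P j)) = w (m.degree (P i₀)) :=
      le_antisymm (hwi ▸ hlow j hj _ hsupp) (hmin j hj)
    have hle := hmax j (mem_filter.mpr ⟨hj, hwj⟩)
    exact hji (hinj hj his (m.toSyn.injective (le_antisymm hle (m.le_degree hsupp))))
  rw [coeff_sum, sum_eq_single i (fun j hj hji => by rw [coeff_smul, hvanish j hj hji, smul_zero])
    (fun h => absurd his h), coeff_smul, (hmonic i his).coeff_degree, smul_eq_mul, mul_one]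

section Alternant

variable {d : ℕ}

theorem alternant_eq_sum_monomial (α : Fin d → ℕ) :
    alternant d α = ∑ σ : Equiv.Perm (Fin d), (Equiv.Perm.sign σ : ℤ) •
      monomial (Finsupp.equivFunOnFinite.symm (α ∘ σ.symm)) (1 : ℚ) := by
  refine sum_congr rfl fun σ _ => congrArg _ ?_
  rw [monomial_eq, C_1, one_mul, Finsupp.prod_fintype _ _ fun _ => pow_zero _]
  exact Fintype.prod_equiv σ _ _ fun i => by simp

theorem exists_perm_of_mem_support_alternant {α : Fin d → ℕ} {e : Fin d →₀ ℕ}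
    (he : e ∈ (alternant d α).support) : ∃ σ : Equiv.Perm (Fin d), ⇑e = α ∘ σ := by
  classical
  rw [alternant_eq_sum_monomial] at he
  obtain ⟨σ, -, hσ⟩ := Finset.mem_biUnion.mp (support_sum he)
  have := support_smul hσ
  rw [support_monomial, if_neg one_ne_zero, mem_singleton] at this
  exact ⟨σ.symm, by simp [this]⟩

theorem coeff_alternant_self {α : Fin d → ℕ} (hα : Function.Injective α) :
    coeff (Finsupp.equivFunOnFinite.symm α) (alternant d α) = 1 := by
  classical
  rw [alternant_eq_sum_monomial, coeff_sum, sum_eq_single 1]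
  · rw [Equiv.Perm.sign_one, Units.val_one, one_smul, coeff_monomial]
    exact if_pos rfl
  · intro σ _ hσ
    rw [coeff_smul, coeff_monomial, if_neg, smul_zero]
    intro h
    refine hσ (Equiv.ext fun i => hα ?_)
    simpa using (congrArg (· (σ i)) h).symm
  · simp

theorem StrictAnti.toLex_comp_perm_le {α : Fin d → ℕ} (hα : StrictAnti α) (σ : Equiv.Perm (Fin d)) :
    toLex (Finsupp.equivFunOnFinite.symm (α ∘ σ)) ≤ toLex (Finsupp.equivFunOnFinite.symm α) := by
  by_cases hσ : σ = 1
  · subst hσ; rfl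
  obtain ⟨j, hj, hjmin⟩ : ∃ j, σ j ≠ j ∧ ∀ i < j, σ i = i := by
    obtain ⟨j, hj⟩ := not_forall.mp (mt Equiv.ext hσ)
    obtain ⟨j, hj, hmin⟩ := wellFounded_lt.has_min {j | σ j ≠ j} ⟨j, hj⟩
    exact ⟨j, hj, fun i hi => by_contra fun h => hmin i h hi⟩
  have hjσ : j < σ j := by
    refine lt_of_le_of_ne (not_lt.mp fun h => hj ?_) (Ne.symm hj)
    exact σ.injective (hjmin _ h)
  refine le_of_lt (Finsupp.Lex.lt_iff.mpr ⟨j, fun i hi => ?_, ?_⟩)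
  · simp [hjmin i hi]
  · simpa using hα hjσ

theorem weight_le_of_mem_support_alternant {ω α : Fin d → ℕ} (hω : Monotone ω) (hα : Antitone α)
    {e : Fin d →₀ ℕ} (he : e ∈ (alternant d α).support) :
    Finsupp.weight ω (Finsupp.equivFunOnFinite.symm α) ≤ Finsupp.weight ω e := by
  obtain ⟨σ, hσ⟩ := exists_perm_of_mem_support_alternant he
  rw [Finsupp.weight_eq_sum, Finsupp.weight_eq_sum, hσ]
  exact (hα.antivary hω).sum_smul_le_sum_comp_perm_smul

theorem degree_lex_alternant {α : Fin d → ℕ} (hα : StrictAnti α) :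
    MonomialOrder.lex.degree (alternant d α) = Finsupp.equivFunOnFinite.symm α := by
  refine MonomialOrder.lex.toSyn.injective (le_antisymm ?_ ?_)
  · refine MonomialOrder.degree_le_iff.mpr fun e he => ?_
    obtain ⟨σ, hσ⟩ := exists_perm_of_mem_support_alternant he
    rw [MonomialOrder.lex_le_iff]
    convert hα.toLex_comp_perm_le σ
    ext i
    simp [hσ]
  · refine MonomialOrder.le_degree (mem_support_iff.mpr ?_)
    rw [coeff_alternant_self hα.injective]
    exact one_ne_zero

theorem monic_lex_alternant {α : Fin d → ℕ} (hα : StrictAnti α) :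
    MonomialOrder.lex.Monic (alternant d α) := by
  rw [MonomialOrder.Monic, MonomialOrder.leadingCoeff, degree_lex_alternant hα,
    coeff_alternant_self hα.injective]

theorem weight_le_of_mem_support_alternant_mul_pow {ω α β : Fin d → ℕ} (hω : Monotone ω)
    (hα : Antitone α) (hβ : Antitone β) (n : ℕ) :
    ∀ e ∈ (alternant d α * alternant d β ^ n).support,
      Finsupp.weight ω (Finsupp.equivFunOnFinite.symm α) +
        n • Finsupp.weight ω (Finsupp.equivFunOnFinite.symm β) ≤ Finsupp.weight ω e :=
  le_weight_of_mem_support_mul (fun _ => weight_le_of_mem_support_alternant hω hα)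
    (le_weight_of_mem_support_pow (fun _ => weight_le_of_mem_support_alternant hω hβ) n)

theorem degree_lex_alternant_mul_pow {α β : Fin d → ℕ} (hα : StrictAnti α) (hβ : StrictAnti β)
    (n : ℕ) : MonomialOrder.lex.degree (alternant d α * alternant d β ^ n) =
      Finsupp.equivFunOnFinite.symm α + n • Finsupp.equivFunOnFinite.symm β := by
  rw [MonomialOrder.degree_mul (monic_lex_alternant hα).ne_zero
    ((monic_lex_alternant hβ).pow.ne_zero), MonomialOrder.degree_pow,
    degree_lex_alternant hα, degree_lex_alternant hβ]

end Alternant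

def staircase (d : ℕ) : Fin d → ℕ := fun i => d - 1 - i.val

theorem staircase_strictAnti (d : ℕ) : StrictAnti (staircase d) := by
  intro i j hij
  have := j.isLt
  simp only [staircase]
  omega

theorem schurPoly_eq_div (d : ℕ) (l : Fin d → ℕ) :
    schurPoly d l = algebraMap _ _ (alternant d (l + staircase d)) /
      algebraMap _ (FractionRing (MvPolynomial (Fin d) ℚ)) (alternant d (staircase d)) :=
  rfl

theorem alternant_mul_pow_eq_sum_of_schurPoly {d n : ℕ} {μ ν : Fin d → ℕ}
    {s : Finset (Fin d → ℕ)} {c : (Fin d → ℕ) → ℕ}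
    (h : schurPoly d μ * schurPoly d ν ^ n =
      ∑ l ∈ s, (c l : FractionRing (MvPolynomial (Fin d) ℚ)) * schurPoly d l) :
    alternant d (μ + staircase d) * alternant d (ν + staircase d) ^ n =
      ∑ l ∈ s, (c l : ℚ) • (alternant d (l + staircase d) * alternant d (staircase d) ^ n) := by
  set φ := algebraMap (MvPolynomial (Fin d) ℚ) (FractionRing (MvPolynomial (Fin d) ℚ))
  have hφ : Function.Injective φ := IsFractionRing.injective _ _
  have hD : φ (alternant d (staircase d)) ≠ 0 :=
    (map_ne_zero_iff φ hφ).mpr (monic_lex_alternant (staircase_strictAnti d)).ne_zero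
  apply hφ
  simp only [schurPoly_eq_div] at h
  simp only [map_mul, map_pow, map_sum, Nat.cast_smul_eq_nsmul, nsmul_eq_mul, map_natCast]
  generalize φ (alternant d (staircase d)) = D at hD h ⊢
  calc _ = φ (alternant d (μ + staircase d)) / D * (φ (alternant d (ν + staircase d)) / D) ^ n *
        D ^ (n + 1) := by rw [div_pow]; field_simp; ring
    _ = _ := by
      rw [h, sum_mul]
      refine sum_congr rfl fun l _ => ?_
      field_simp
      ring

def tailWeight (d t : ℕ) : Fin d → ℕ := fun i => if t ≤ i.val then 1 else 0

theorem monotone_tailWeight (d t : ℕ) : Monotone (tailWeight d t) := by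
  intro i j hij
  have : i.val ≤ j.val := hij
  simp only [tailWeight]
  split_ifs <;> omega

theorem weight_tailWeight {d : ℕ} (t : ℕ) (f : Fin d → ℕ) :
    Finsupp.weight (tailWeight d t) (Finsupp.equivFunOnFinite.symm f) =
      ∑ i ∈ univ.filter (fun i : Fin d => t ≤ i.val), f i := by
  simp [Finsupp.weight_eq_sum, sum_filter, tailWeight]

theorem mul_add_last_le_sum_tail {d k a : ℕ} {f : Fin d → ℕ} (hk : k < d)
    (h : ∀ i : Fin d, i.val ≠ d - 1 → a ≤ f i) :
    k * a + f ⟨d - 1, by omega⟩ ≤ ∑ i ∈ univ.filter (fun i : Fin d => d - 1 - k ≤ i.val), f i := by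
  have hle := nsmul_add_le_sum_of_le_of_ne (s := univ.filter (fun i : Fin d => d - 1 - k ≤ i.val))
    (j := ⟨d - 1, by omega⟩) (by simp; omega) (fun i _ hi => h i fun h' => hi (Fin.ext h'))
  rwa [Fin.card_filter_le_val, smul_eq_mul, show d - (d - 1 - k) - 1 = k by omega] at hle

theorem antitone_partFourThreeTwos (d : ℕ) : Antitone (partFourThreeTwos d) := by
  intro i j hij
  have : i.val ≤ j.val := hij
  simp only [partFourThreeTwos]
  split_ifs <;> omega

theorem antitone_partThreeOnes (d : ℕ) : Antitone (partThreeOnes d) := by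
  intro i j hij
  have : i.val ≤ j.val := hij
  simp only [partThreeOnes]
  split_ifs <;> omega

theorem le_sum_tail_partFourThreeTwos {d k : ℕ} (hk : k < d) :
    2 * k + 1 ≤ ∑ i ∈ univ.filter (fun i : Fin d => d - 1 - k ≤ i.val), partFourThreeTwos d i := by
  refine le_trans ?_ (mul_add_last_le_sum_tail (a := 2) hk fun i hi => ?_)
  · simp only [partFourThreeTwos]
    split_ifs <;> omega
  · simp only [partFourThreeTwos]
    split_ifs <;> omega

theorem le_sum_tail_partThreeOnes {d k : ℕ} (hk : k < d) :
    k ≤ ∑ i ∈ univ.filter (fun i : Fin d => d - 1 - k ≤ i.val), partThreeOnes d i := by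
  refine le_trans ?_ (mul_add_last_le_sum_tail (a := 1) hk fun i hi => ?_)
  · omega
  · simp only [partThreeOnes]
    split_ifs <;> omega

theorem weight_le_of_mem_schurPoly_expansion {d n : ℕ} {μ ν : Fin d → ℕ} (hμ : Antitone μ)
    (hν : Antitone ν) {s : Finset (Fin d → ℕ)} {c : (Fin d → ℕ) → ℕ}
    (hpart : ∀ l ∈ s, Antitone l) (hmult : ∀ l ∈ s, c l ≠ 0)
    (hexp : schurPoly d μ * schurPoly d ν ^ n =
      ∑ l ∈ s, (c l : FractionRing (MvPolynomial (Fin d) ℚ)) * schurPoly d l)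
    {ω : Fin d → ℕ} (hω : Monotone ω) {l : Fin d → ℕ} (hl : l ∈ s) :
    Finsupp.weight ω (Finsupp.equivFunOnFinite.symm μ) +
        n • Finsupp.weight ω (Finsupp.equivFunOnFinite.symm ν) ≤
      Finsupp.weight ω (Finsupp.equivFunOnFinite.symm l) := by
  have hδ := staircase_strictAnti d
  have hstrict : ∀ l ∈ s, StrictAnti (l + staircase d) := fun l hl =>
    (hpart l hl).add_strictAnti hδ
  have hdeg (l) (hl : l ∈ s) := degree_lex_alternant_mul_pow (hstrict l hl) hδ n
  have hlow : ∀ l ∈ s,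
      ∀ e ∈ (alternant d (l + staircase d) * alternant d (staircase d) ^ n).support,
      Finsupp.weight ω
        (MonomialOrder.lex.degree (alternant d (l + staircase d) * alternant d (staircase d) ^ n)) ≤
      Finsupp.weight ω e := by
    intro l hl
    rw [hdeg l hl, map_add, map_nsmul]
    exact weight_le_of_mem_support_alternant_mul_pow hω (hstrict l hl).antitone hδ.antitone n
  obtain ⟨l₀, hl₀, hmin, hcoeff⟩ := MonomialOrder.lex.exists_coeff_degree_sum_eq
    (Finsupp.weight ω) ⟨l, hl⟩
    (fun l hl => (monic_lex_alternant (hstrict l hl)).mul (monic_lex_alternant hδ).pow)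
    (fun l hl l' hl' h => add_right_cancel (Finsupp.equivFunOnFinite.symm.injective
      (add_right_cancel ((hdeg l hl).symm.trans (h.trans (hdeg l' hl'))))))
    hlow (fun l => (c l : ℚ))
  rw [← alternant_mul_pow_eq_sum_of_schurPoly hexp] at hcoeff
  have hlower := weight_le_of_mem_support_alternant_mul_pow (α := μ + staircase d)
    (β := ν + staircase d) hω (hμ.add hδ.antitone) (hν.add hδ.antitone) n _
    (mem_support_iff.mpr (hcoeff ▸ Nat.cast_ne_zero.mpr (hmult l₀ hl₀)))
  have hl₀l := hmin l hl
  have hadd (f g : Fin d → ℕ) : Finsupp.equivFunOnFinite.symm (f + g) =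
      Finsupp.equivFunOnFinite.symm f + Finsupp.equivFunOnFinite.symm g := Finsupp.ext fun _ => rfl
  simp only [hdeg l hl, hdeg l₀ hl₀, hadd, map_add, map_nsmul, smul_add] at hlower hl₀l
  omega

/-- Any partition λ appearing with nonzero multiplicity in the decomposition of
S_{(4,3,2,...,2,1)}V ⊗ (S_{(3,1,...,1,0)}V)^{⊗(r−2)} satisfies
λ_{d−k} + ... + λ_d ≥ rk + 1 for every 0 ≤ k ≤ d−1.  (Multiplicities are read
off from the Schur-polynomial expansion of the product of characters.) -/
theorem tail_sum_bound (d r : ℕ) (hd : 3 ≤ d) (hr : 2 ≤ r)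
    (s : Finset (Fin d → ℕ)) (c : (Fin d → ℕ) → ℕ)
    (hpart : ∀ l ∈ s, Antitone l)
    (hmult : ∀ l ∈ s, c l ≠ 0)
    (hexp : schurPoly d (partFourThreeTwos d) *
        (schurPoly d (partThreeOnes d)) ^ (r - 2) =
      ∑ l ∈ s, (c l : FractionRing (MvPolynomial (Fin d) ℚ)) * schurPoly d l) :
    ∀ l ∈ s, ∀ k ≤ d - 1,
      r * k + 1 ≤ ∑ i ∈ Finset.univ.filter (fun i : Fin d => d - 1 - k ≤ i.val),
        l i := by
  intro l hl k hk
  have h := weight_le_of_mem_schurPoly_expansion (antitone_partFourThreeTwos d)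
    (antitone_partThreeOnes d) hpart hmult hexp (monotone_tailWeight d (d - 1 - k)) hl
  simp only [weight_tailWeight, smul_eq_mul] at h
  have hμ := le_sum_tail_partFourThreeTwos (d := d) (k := k) (by omega)
  have hν := Nat.mul_le_mul_left (r - 2) (le_sum_tail_partThreeOnes (d := d) (k := k) (by omega))
  have hr' : r * k = (r - 2) * k + 2 * k := by rw [← add_mul]; congr 1; omega
  omega
end

section
/- Let R be a commutative ring, and p_{m,ij} ∈ R symmetric in (i,j). For distinct a, i, j, k define C(a;j,(i,k)) = Σ_{m=1}^d (p_{m,ij}p_{a,km} − p_{m,kj}p_{a,im}). Under the change of variables q_{k,st} defined by p_{k,st} = q_{k,st} for k ∉ {s,t} and p_{k,sk} = q_{k,sk} + q_{s,ss} (s ≠ k), p_{s,ss} = q_{s,ss}, the expression C(a;j,(i,k)) for distinct a,i,j,k, when rewritten in the q-variables, contains no term involving any q_{s,ss} (1 ≤ s ≤ d); explicitly C(a;j,(i,k)) = Σ_{m∉{a,j,i,k}}(q_{m,ij}q_{a,km} − q_{m,kj}q_{a,im}) + (q_{j,ij}q_{a,kj} − q_{j,kj}q_{a,ij}) + (q_{a,ij}q_{a,ka}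 − q_{a,kj}q_{a,ia}) + (q_{i,ij}q_{a,ki} − q_{i,kj}q_{a,ii}) + (q_{k,ij}q_{a,kk} − q_{k,kj}q_{a,ik}). -/
open Finset

/-- Under the substitution p_{k,st} = q_{k,st} (k ∉ {s,t}),
p_{k,sk} = q_{k,sk} + q_{s,ss} (s ≠ k), p_{s,ss} = q_{s,ss}, the quadric
C(a;j,(i,k)) (a,i,j,k distinct) rewrites in the q-variables with no term
involving any diagonal variable q_{s,ss}. -/
theorem diagonal_elimination (d : ℕ) (R : Type*) [CommRing R]
    (q : Fin d → Fin d → Fin d → R)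
    (hqsym : ∀ m s t, q m s t = q m t s)
    (p : Fin d → Fin d → Fin d → R)
    (hp : ∀ k s t, p k s t = q k s t
      + (if t = k ∧ s ≠ k then q s s s else 0)
      + (if s = k ∧ t ≠ k then q t t t else 0))
    (a i j k : Fin d)
    (hdist : a ≠ i ∧ a ≠ j ∧ a ≠ k ∧ i ≠ j ∧ i ≠ k ∧ j ≠ k) :
    ∑ m : Fin d, (p m i j * p a k m - p m k j * p a i m) =
      (∑ m ∈ Finset.univ \ ({a, j, i, k} : Finset (Fin d)),
        (q m i j * q a k m - q m k j * q a i m))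
      + (q j i j * q a k j - q j k j * q a i j)
      + (q a i j * q a k a - q a k j * q a i a)
      + (q i i j * q a k i - q i k j * q a i i)
      + (q k i j * q a k k - q k k j * q a i k) := by
  obtain ⟨hai, haj, hak, hij, hik, hjk⟩ := hdist
  have hs : ({a, j, i, k} : Finset (Fin d)) ⊆ Finset.univ := Finset.subset_univ _
  rw [← Finset.sum_sdiff hs]
  have hcompl : ∑ m ∈ Finset.univ \ ({a, j, i, k} : Finset (Fin d)),
      (p m i j * p a k m - p m k j * p a i m)
      = ∑ m ∈ Finset.univ \ ({a, j, i, k} : Finset (Fin d)),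
      (q m i j * q a k m - q m k j * q a i m) := by
    refine Finset.sum_congr rfl fun m hm => ?_
    simp only [Finset.mem_sdiff, Finset.mem_insert, Finset.mem_singleton,
      Finset.mem_univ, true_and, not_or] at hm
    obtain ⟨hma, hmj, hmi, hmk⟩ := hm
    rw [hp, hp, hp, hp]
    simp [hma, hmj, hmi, hmk, Ne.symm hma, Ne.symm hmj, Ne.symm hmi, Ne.symm hmk,
      hai, haj, hak, hij, hik, hjk,
      Ne.symm hai, Ne.symm haj, Ne.symm hak, Ne.symm hij, Ne.symm hik, Ne.symm hjk]
  rw [hcompl]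
  have hset : ∑ m ∈ ({a, j, i, k} : Finset (Fin d)),
      (p m i j * p a k m - p m k j * p a i m)
      = (p a i j * p a k a - p a k j * p a i a)
      + (p j i j * p a k j - p j k j * p a i j)
      + (p i i j * p a k i - p i k j * p a i i)
      + (p k i j * p a k k - p k k j * p a i k) := by
    rw [Finset.sum_insert (by simp [haj, hai, hak]),
        Finset.sum_insert (by simp [Ne.symm hij, hjk]),
        Finset.sum_insert (by simp [hik]),
        Finset.sum_singleton]
    ring
  rw [hset]
  simp only [hp]
  simp [hai, haj, hak, hij, hik, hjk,
    Ne.symm hai, Ne.symm haj, Ne.symm hak, Ne.symm hij, Ne.symm hik, Ne.symm hjk,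
    hqsym a i a, hqsym a k a, hqsym a k i]
  ring
end

section
/- Let f : R → R' be the ring endomorphism of the polynomial ring R = ℂ[p_{0,ij}, p_{k,st}]/(symmetry relations) sending p'_{0,ij} ↦ C(i+1; j, (i, i+1)) and p'_{k,st} ↦ p_{k,st}, where C(k;j,(i,k)) = p_{0,ij} + Σ_{m=1}^d (p_{m,ij}p_{k,km} − p_{m,kj}p_{k,im}). Then f is a ring isomorphism. -/
open Finset MvPolynomial

/-- Ordered index pairs (i,j) with i ≤ j, encoding the symmetry relations
p_{·,ij} = p_{·,ji}. -/
def OPair (d : ℕ) := {ij : Fin d × Fin d // ij.1 ≤ ij.2}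

/-- Index type for the variables p_{0,ij} (left) and p_{k,st} (right) of the
ring R = ℂ[p_{0,ij}, p_{k,st}]/(symmetry relations). -/
def PIdx (d : ℕ) := OPair d ⊕ (Fin d × OPair d)

/-- The variable p_{k,st}, symmetrized in (s,t). -/
noncomputable def pvar (d : ℕ) (k s t : Fin d) : MvPolynomial (PIdx d) ℂ :=
  if h : s ≤ t then X (Sum.inr (k, ⟨(s, t), h⟩))
  else X (Sum.inr (k, ⟨(t, s), le_of_not_ge h⟩))

/-- The substitution f : p_{0,ij} ↦ C(i+1; j, (i,i+1))
= p_{0,ij} + Σ_m (p_{m,ij} p_{i+1,(i+1)m} − p_{m,(i+1)j} p_{i+1,im}),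
p_{k,st} ↦ p_{k,st}, with i+1 taken cyclically (i+1 := 1 if i = d). -/
noncomputable def deBoorSubstitution (d : ℕ) [NeZero d] :
    MvPolynomial (PIdx d) ℂ →ₐ[ℂ] MvPolynomial (PIdx d) ℂ :=
  MvPolynomial.aeval fun v =>
    match v with
    | Sum.inl ij =>
        (X (Sum.inl ij : PIdx d) : MvPolynomial (PIdx d) ℂ) +
          ∑ m : Fin d,
            (pvar d m ij.val.1 ij.val.2 *
                pvar d (ij.val.1 + 1) (ij.val.1 + 1) m -
              pvar d m (ij.val.1 + 1) ij.val.2 *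
                pvar d (ij.val.1 + 1) ij.val.1 m)
    | Sum.inr v => (X (Sum.inr v : PIdx d) : MvPolynomial (PIdx d) ℂ)


namespace MvPolynomial

variable {R ι : Type*}

theorem aeval_eq_self_of_mem_supported [CommSemiring R] {g : ι → MvPolynomial ι R} {s : Set ι}
    (hg : ∀ j ∈ s, g j = X j) {p : MvPolynomial ι R} (hp : p ∈ supported R s) :
    aeval g p = p :=
  AlgHom.eqOn_adjoin_iff (ψ := AlgHom.id R _) |>.mpr
    (by rintro _ ⟨j, hj, rfl⟩; simp [hg j hj]) hp

-- The inverse is `X i ↦ X i - c i`: both substitutions fix every `c j`, as its variables lie in `s`.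
theorem aeval_X_add_bijective [CommRing R] (c : ι → MvPolynomial ι R) {s : Set ι}
    (hc : ∀ i, c i ∈ supported R s) (hs : ∀ j ∈ s, c j = 0) :
    Function.Bijective (aeval (R := R) fun i => X i + c i) := by
  set f := aeval (R := R) fun i => X i + c i
  set g := aeval (R := R) fun i => X i - c i
  have hf : ∀ i, f (c i) = c i := fun i =>
    aeval_eq_self_of_mem_supported (fun j hj => by simp [hs j hj]) (hc i)
  have hg : ∀ i, g (c i) = c i := fun i =>
    aeval_eq_self_of_mem_supported (fun j hj => by simp [hs j hj]) (hc i)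
  have hfX : ∀ i, f (X i) = X i + c i := fun i => aeval_X _ _
  have hgX : ∀ i, g (X i) = X i - c i := fun i => aeval_X _ _
  have hgf : g.comp f = AlgHom.id R _ := algHom_ext fun i => by
    simp only [AlgHom.comp_apply, AlgHom.id_apply, hfX, map_add, hgX, hg, sub_add_cancel]
  have hfg : f.comp g = AlgHom.id R _ := algHom_ext fun i => by
    simp only [AlgHom.comp_apply, AlgHom.id_apply, hgX, map_sub, hfX, hf, add_sub_cancel_right]
  exact Function.bijective_iff_has_inverse.mpr
    ⟨g, AlgHom.congr_fun hgf, AlgHom.congr_fun hfg⟩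

end MvPolynomial

noncomputable def deBoorCorrection (d : ℕ) [NeZero d] : PIdx d → MvPolynomial (PIdx d) ℂ
  | Sum.inl ij =>
    ∑ m : Fin d,
      (pvar d m ij.val.1 ij.val.2 * pvar d (ij.val.1 + 1) (ij.val.1 + 1) m -
        pvar d m (ij.val.1 + 1) ij.val.2 * pvar d (ij.val.1 + 1) ij.val.1 m)
  | Sum.inr _ => 0

theorem deBoorSubstitution_eq_aeval (d : ℕ) [NeZero d] :
    deBoorSubstitution d = aeval fun v => X v + deBoorCorrection d v := by
  refine algHom_ext fun v => ?_
  rw [deBoorSubstitution, aeval_X, aeval_X]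
  rcases v with ij | v
  · rfl
  · rw [deBoorCorrection, add_zero]

theorem pvar_mem_supported (d : ℕ) (k s t : Fin d) :
    pvar d k s t ∈ supported ℂ {v | v.isRight} := by
  unfold pvar
  split <;> exact (X_mem_supported).mpr rfl

theorem deBoorCorrection_mem_supported (d : ℕ) [NeZero d] (v : PIdx d) :
    deBoorCorrection d v ∈ supported ℂ {v | v.isRight} := by
  rcases v with ij | v
  · have hp := pvar_mem_supported d
    exact Subalgebra.sum_mem _ fun m _ => Subalgebra.sub_mem _
      (Subalgebra.mul_mem _ (hp _ _ _) (hp _ _ _)) (Subalgebra.mul_mem _ (hp _ _ _) (hp _ _ _))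
  · exact Subalgebra.zero_mem _

/-- The substitution f is a ring isomorphism (it is a bijective ring map). -/
theorem deBoorSubstitution_bijective (d : ℕ) [NeZero d] :
    Function.Bijective (deBoorSubstitution d) := by
  rw [deBoorSubstitution_eq_aeval]
  refine aeval_X_add_bijective _ (deBoorCorrection_mem_supported d) ?_
  rintro (ij | v) h
  · cases h
  · rfl
end
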